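/- Let G be a connected simple graph on n vertices and at least n edges, let e be an edge of G such that the graph G' obtained from G by deleting e is still connected, and let ∂L_1 ≥ ⋯ ≥ ∂L_n and ∂'L_1 ≥ ⋯ ≥ ∂'L_n denote the distance Laplacian eigenvalues of G and G' respectively, each listed in nonincreasing order with multiplicity. Then ∂'L_i ≥ ∂L_i for all i = 1,…,n. -/

import Mathlib

open Matrix

/-- The distance Laplacian matrix of a graph: diagonal entries are the transmissions
`Tr(v) = ∑ u, d(v,u)`, off-diagonal entries are `-d(u,v)`. -/
noncomputable def distLaplacian {V : Type*} [Fintype V] [DecidableEq V]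
    (G : SimpleGraph V) : Matrix V V ℝ :=
  Matrix.of fun i j => if i = j then ∑ k : V, (G.dist i k : ℝ) else -(G.dist i j : ℝ)

/-- The multiplicity of `μ` as an eigenvalue of `M`, i.e. the dimension of the
corresponding eigenspace. -/
noncomputable def eigMult {V : Type*} [Fintype V] (M : Matrix V V ℝ) (μ : ℝ) : ℕ :=
  Module.finrank ℝ (Module.End.eigenspace M.mulVecLin μ)

/-- The largest eigenvalue of a matrix. -/
noncomputable def lambdaMax {V : Type*} [Fintype V] (M : Matrix V V ℝ) : ℝ :=
  sSup {μ : ℝ | Module.End.HasEigenvalue M.mulVecLin μ}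

/-- The transmission of a vertex. -/
noncomputable def transmission {V : Type*} [Fintype V] (G : SimpleGraph V) (v : V) : ℕ :=
  ∑ u : V, G.dist v u

/-- The distance Laplacian eigenvalues of `G`, with multiplicity, sorted in
nonincreasing order (so `∂ᴸ₁` comes first). -/
noncomputable def distLapEigsDesc {V : Type*} [Fintype V] [DecidableEq V]
    (G : SimpleGraph V) : List ℝ :=
  ((distLaplacian G).charpoly.roots.sort (· ≤ ·)).reverse

/-!
Removing an edge while keeping the graph connected can only increase distances, so
`D^L(G') - D^L(G)` is the Laplacian of the nonnegative symmetric weights `d_{G'} - d_G`.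
Such a Laplacian is weakly diagonally dominant, hence positive semidefinite by Gershgorin's
theorem, and the claim becomes Weyl's monotonicity theorem: `A ≤ B` in the Loewner order implies
`λᵢ(A) ≤ λᵢ(B)`. For the latter, the span of the top `i + 1` eigenvectors of `A` and the span of
the bottom `n - i` eigenvectors of `B` meet in a nonzero `x`, and
`λᵢ(A) ‖x‖² ≤ ⟪A x, x⟫ ≤ ⟪B x, x⟫ ≤ λᵢ(B) ‖x‖²`.
-/

open Module
open scoped InnerProductSpace MatrixOrder ComplexOrder

namespace OrthonormalBasis

variable {ι 𝕜 E : Type*} [Fintype ι] [RCLike 𝕜] [NormedAddCommGroup E] [InnerProductSpace 𝕜 E]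

lemma repr_eq_zero_of_mem_span_image (b : OrthonormalBasis ι 𝕜 E) {s : Set ι} {x : E}
    (hx : x ∈ Submodule.span 𝕜 (b '' s)) {i : ι} (hi : i ∉ s) : b.repr x i = 0 := by
  rw [← b.coe_toBasis, Module.Basis.mem_span_image] at hx
  rw [← b.coe_toBasis_repr_apply]
  exact Finsupp.notMem_support_iff.mp fun h => hi (hx h)

lemma finrank_span_image (b : OrthonormalBasis ι 𝕜 E) (s : Finset ι) :
    finrank 𝕜 (Submodule.span 𝕜 (b '' s)) = s.card := by
  rw [Set.image_eq_range, finrank_span_eq_card (b := fun j : (s : Set ι) => b j)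
    (b.orthonormal.linearIndependent.comp _ Subtype.val_injective)]
  simp

end OrthonormalBasis

namespace LinearMap.IsSymmetric

variable {𝕜 E : Type*} [RCLike 𝕜] [NormedAddCommGroup E] [InnerProductSpace 𝕜 E]
  [FiniteDimensional 𝕜 E] {n : ℕ} {T S : E →ₗ[𝕜] E}

lemma re_inner_apply_self_eq_sum (hT : T.IsSymmetric) (hn : finrank 𝕜 E = n) (x : E) :
    RCLike.re ⟪T x, x⟫_𝕜 =
      ∑ i, hT.eigenvalues hn i * ‖(hT.eigenvectorBasis hn).repr x i‖ ^ 2 := by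
  rw [← (hT.eigenvectorBasis hn).repr.inner_map_map, PiLp.inner_apply, map_sum]
  refine Finset.sum_congr rfl fun i _ => ?_
  rw [hT.eigenvectorBasis_apply_self_apply, RCLike.inner_apply, mul_comm,
    map_mul (starRingEnd 𝕜), RCLike.conj_ofReal, mul_assoc, RCLike.conj_mul,
    ← RCLike.ofReal_pow, ← RCLike.ofReal_mul, RCLike.ofReal_re]

lemma mul_norm_sq_le_re_inner_apply_self (hT : T.IsSymmetric) (hn : finrank 𝕜 E = n) {c : ℝ}
    {x : E} (hx : ∀ i, (hT.eigenvectorBasis hn).repr x i ≠ 0 → c ≤ hT.eigenvalues hn i) :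
    c * ‖x‖ ^ 2 ≤ RCLike.re ⟪T x, x⟫_𝕜 := by
  rw [hT.re_inner_apply_self_eq_sum hn, ← (hT.eigenvectorBasis hn).repr.norm_map,
    EuclideanSpace.norm_sq_eq, Finset.mul_sum]
  refine Finset.sum_le_sum fun i _ => ?_
  by_cases hi : (hT.eigenvectorBasis hn).repr x i = 0
  · simp [hi]
  · exact mul_le_mul_of_nonneg_right (hx i hi) (by positivity)

lemma re_inner_apply_self_le_mul_norm_sq (hT : T.IsSymmetric) (hn : finrank 𝕜 E = n) {c : ℝ}
    {x : E} (hx : ∀ i, (hT.eigenvectorBasis hn).repr x i ≠ 0 → hT.eigenvalues hn i ≤ c) :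
    RCLike.re ⟪T x, x⟫_𝕜 ≤ c * ‖x‖ ^ 2 := by
  rw [hT.re_inner_apply_self_eq_sum hn, ← (hT.eigenvectorBasis hn).repr.norm_map,
    EuclideanSpace.norm_sq_eq, Finset.mul_sum]
  refine Finset.sum_le_sum fun i _ => ?_
  by_cases hi : (hT.eigenvectorBasis hn).repr x i = 0
  · simp [hi]
  · exact mul_le_mul_of_nonneg_right (hx i hi) (by positivity)

theorem eigenvalues_le_eigenvalues_of_le (hT : T.IsSymmetric) (hS : S.IsSymmetric)
    (hn : finrank 𝕜 E = n) (hTS : T ≤ S) (i : Fin n) :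
    hT.eigenvalues hn i ≤ hS.eigenvalues hn i := by
  set b := hT.eigenvectorBasis hn
  set b' := hS.eigenvectorBasis hn
  set W := Submodule.span 𝕜 (b '' (Finset.Iic i : Set (Fin n)))
  set Z := Submodule.span 𝕜 (b' '' (Finset.Ici i : Set (Fin n)))
  have hWZ : ¬Disjoint W Z := fun h => by
    have := Submodule.finrank_add_finrank_le_of_disjoint h
    rw [b.finrank_span_image, b'.finrank_span_image, Fin.card_Iic, Fin.card_Ici, hn] at this
    omega
  obtain ⟨x, hxW, hxZ, hx⟩ : ∃ x ∈ W, x ∈ Z ∧ x ≠ 0 := by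
    simpa [Submodule.disjoint_def] using hWZ
  have hT_ge : hT.eigenvalues hn i * ‖x‖ ^ 2 ≤ RCLike.re ⟪T x, x⟫_𝕜 :=
    hT.mul_norm_sq_le_re_inner_apply_self hn fun j hj => hT.eigenvalues_antitone hn <| by
      by_contra hji
      exact hj (b.repr_eq_zero_of_mem_span_image hxW (by simpa using hji))
  have hS_le : RCLike.re ⟪S x, x⟫_𝕜 ≤ hS.eigenvalues hn i * ‖x‖ ^ 2 :=
    hS.re_inner_apply_self_le_mul_norm_sq hn fun j hj => hS.eigenvalues_antitone hn <| by
      by_contra hij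
      exact hj (b'.repr_eq_zero_of_mem_span_image hxZ (by simpa using hij))
  have hTS_x : RCLike.re ⟪T x, x⟫_𝕜 ≤ RCLike.re ⟪S x, x⟫_𝕜 := by
    have := hTS.re_inner_nonneg_left x
    rwa [LinearMap.sub_apply, inner_sub_left, map_sub, sub_nonneg] at this
  exact le_of_mul_le_mul_right (hT_ge.trans (hTS_x.trans hS_le)) (by positivity)

end LinearMap.IsSymmetric

namespace Matrix.IsHermitian

variable {𝕜 n : Type*} [RCLike 𝕜] [Fintype n] [DecidableEq n] {A B : Matrix n n 𝕜}

theorem eigenvalues₀_le_eigenvalues₀_of_le (hA : A.IsHermitian) (hB : B.IsHermitian)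
    (hAB : A ≤ B) (i : Fin (Fintype.card n)) : hA.eigenvalues₀ i ≤ hB.eigenvalues₀ i := by
  refine LinearMap.IsSymmetric.eigenvalues_le_eigenvalues_of_le _ _ _ ?_ i
  rw [LinearMap.le_def, ← map_sub, Matrix.isPositive_toEuclideanLin_iff]
  exact hAB

theorem posSemidef_of_sum_norm_le_re_diag (hA : A.IsHermitian)
    (hdom : ∀ k, ∑ j ∈ Finset.univ.erase k, ‖A k j‖ ≤ RCLike.re (A k k)) : A.PosSemidef := by
  rw [hA.posSemidef_iff_eigenvalues_nonneg]
  intro i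
  have hμ : Module.End.HasEigenvalue (Matrix.toLin' A) (hA.eigenvalues i : 𝕜) := by
    rw [Module.End.hasEigenvalue_iff_mem_spectrum, Matrix.spectrum_toLin',
      hA.spectrum_eq_image_range]
    exact Set.mem_image_of_mem _ (Set.mem_range_self i)
  obtain ⟨k, hk⟩ := eigenvalue_mem_ball hμ
  rw [Metric.mem_closedBall, dist_comm, dist_eq_norm] at hk
  have := (RCLike.re_le_norm (A k k - hA.eigenvalues i)).trans (hk.trans (hdom k))
  rw [map_sub, RCLike.ofReal_re] at this
  simpa using this

theorem reverse_sort_roots_charpoly {A : Matrix n n ℝ} (hA : A.IsHermitian) :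
    (A.charpoly.roots.sort (· ≤ ·)).reverse = List.ofFn hA.eigenvalues₀ := by
  refine List.Perm.eq_of_sortedGE ?_ hA.eigenvalues₀_antitone.sortedGE_ofFn ?_
  · exact (List.sortedLE_iff_pairwise.mpr (Multiset.pairwise_sort _ _)).reverse
  · rw [← Multiset.coe_eq_coe, Multiset.coe_reverse, Multiset.sort_eq, ← Fin.univ_val_map,
      hA.roots_charpoly_eq_eigenvalues₀]
    rfl

end Matrix.IsHermitian

noncomputable def weightedLaplacian {V : Type*} [Fintype V] [DecidableEq V] (w : V → V → ℝ) :
    Matrix V V ℝ :=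
  Matrix.of fun i j => if i = j then ∑ k, w i k else -w i j

section weightedLaplacian

variable {V : Type*} [Fintype V] [DecidableEq V]

lemma weightedLaplacian_sub (w w' : V → V → ℝ) :
    weightedLaplacian w' - weightedLaplacian w = weightedLaplacian (w' - w) := by
  ext i j
  by_cases h : i = j <;> simp [weightedLaplacian, h, neg_add_eq_sub]

lemma posSemidef_weightedLaplacian {w : V → V → ℝ} (hsymm : ∀ i j, w i j = w j i)
    (hw : 0 ≤ w) : (weightedLaplacian w).PosSemidef := by
  have hherm : (weightedLaplacian w).IsHermitian := by
    ext i j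
    by_cases h : i = j
    · simp [weightedLaplacian, h]
    · simp [weightedLaplacian, h, Ne.symm h, hsymm i j]
  refine hherm.posSemidef_of_sum_norm_le_re_diag fun k => ?_
  calc ∑ j ∈ Finset.univ.erase k, ‖weightedLaplacian w k j‖
      = ∑ j ∈ Finset.univ.erase k, w k j :=
        Finset.sum_congr rfl fun j hj => by
          simp [weightedLaplacian, (Finset.ne_of_mem_erase hj).symm, abs_of_nonneg (hw k j)]
    _ ≤ ∑ j, w k j :=
        Finset.sum_le_sum_of_subset_of_nonneg (Finset.erase_subset _ _) fun j _ _ => hw k j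
    _ = RCLike.re (weightedLaplacian w k k) := by simp [weightedLaplacian]

end weightedLaplacian

section distLaplacian

variable {V : Type*} [Fintype V] [DecidableEq V]

lemma distLaplacian_eq_weightedLaplacian (G : SimpleGraph V) :
    distLaplacian G = weightedLaplacian fun u v => (G.dist u v : ℝ) :=
  rfl

lemma isHermitian_distLaplacian (G : SimpleGraph V) : (distLaplacian G).IsHermitian :=
  (posSemidef_weightedLaplacian (fun u v => by rw [G.dist_comm]) fun u v => by
    positivity).isHermitian

lemma distLapEigsDesc_eq_ofFn (G : SimpleGraph V) :
    distLapEigsDesc G = List.ofFn (isHermitian_distLaplacian G).eigenvalues₀ :=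
  (isHermitian_distLaplacian G).reverse_sort_roots_charpoly

lemma distLaplacian_le_distLaplacian {G G' : SimpleGraph V} (h : G' ≤ G)
    (hG' : G'.Preconnected) : distLaplacian G ≤ distLaplacian G' := by
  rw [Matrix.le_iff, distLaplacian_eq_weightedLaplacian, distLaplacian_eq_weightedLaplacian,
    weightedLaplacian_sub]
  refine posSemidef_weightedLaplacian (fun u v => by simp [G.dist_comm, G'.dist_comm])
    fun u v => ?_
  simpa using (hG' u v).dist_anti h

end distLaplacian

theorem distLaplacian_eigenvalues_mono_of_deleteEdge_general
    (n : ℕ) (G : SimpleGraph (Fin n)) (e : Sym2 (Fin n))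
    (G' : SimpleGraph (Fin n)) (hG'def : G' = G.deleteEdges {e}) (hG' : G'.Connected) :
    ∀ i : Fin n, (distLapEigsDesc G).getD i 0 ≤ (distLapEigsDesc G').getD i 0 := by
  intro i
  have hle : G' ≤ G := hG'def ▸ G.deleteEdges_le {e}
  rw [distLapEigsDesc_eq_ofFn, distLapEigsDesc_eq_ofFn, List.getD_eq_getElem _ _ (by simp),
    List.getD_eq_getElem _ _ (by simp), List.getElem_ofFn, List.getElem_ofFn]
  exact Matrix.IsHermitian.eigenvalues₀_le_eigenvalues₀_of_le _ _
    (distLaplacian_le_distLaplacian hle hG'.preconnected) _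

/-- Let `G` be a connected graph on `n` vertices with at least `n` edges,
and let `G'` be obtained from `G` by deleting an edge `e`, with `G'` still connected. Then
`∂'ᴸ_i ≥ ∂ᴸ_i` for all `i = 1, …, n`, where the distance Laplacian eigenvalues of `G` and
`G'` are listed in nonincreasing order with multiplicity. -/
theorem distLaplacian_eigenvalues_mono_of_deleteEdge
    (n : ℕ) (G : SimpleGraph (Fin n)) [DecidableRel G.Adj] (hG : G.Connected)
    (hm : n ≤ G.edgeFinset.card) (e : Sym2 (Fin n)) (he : e ∈ G.edgeSet)
    (G' : SimpleGraph (Fin n)) (hG'def : G' = G.deleteEdges {e}) (hG' : G'.Connected) :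
    ∀ i : Fin n, (distLapEigsDesc G).getD i 0 ≤ (distLapEigsDesc G').getD i 0 :=
  distLaplacian_eigenvalues_mono_of_deleteEdge_general n G e G' hG'def hG'
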